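/- arXiv:1905.09256 — 2 statements merged into one kernel-verified Lean document; each statement's English description precedes it below -/
import Mathlib

section
/- Let G be an X-generated group and let (Γ,g), (Ξ,h) ∈ F(G). Then, in the inverse monoid F(G): (1) (Γ,g) R (Ξ,h) if and only if Γ = Ξ; (2) (Γ,g) L (Ξ,h) if and only if g⁻¹·Γ = h⁻¹·Ξ; (3) (Γ,g) D (Ξ,h) if and only if Γ = k·Ξ for some k ∈ G; and (4) Green's relations J and D coincide on F(G). -/
namespace FInvPaper

universe u v w

section Generic
variable {S : Type u}

/-- The natural partial order on an inverse monoid: `a ≤ b` iff `a = b·e` for some idempotent. -/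
def nle [Mul S] (a b : S) : Prop := ∃ e : S, e * e = e ∧ a = b * e

/-- The minimum group congruence σ: `a σ b` iff `a·e = b·e` for some idempotent `e`. -/
def sigma [Mul S] (a b : S) : Prop := ∃ e : S, e * e = e ∧ a * e = b * e

/-- `m` assigns to every element the maximum element of its σ-class. -/
def IsMaxOp [Mul S] (m : S → S) : Prop :=
  ∀ a : S, sigma (m a) a ∧ ∀ b : S, sigma b a → nle b (m a)

/-- A subset of `S` which is an entire σ-class. -/
def IsSigmaClass [Mul S] (A : Set S) : Prop := ∃ a : S, A = {b : S | sigma b a}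

end Generic

/-- Inverse monoids: monoids with an involution satisfying `a·a⁻¹·a = a`, `(a·b)⁻¹ = b⁻¹·a⁻¹`,
in which all idempotents commute. -/
class InverseMonoid (S : Type u) extends Monoid S, Inv S where
  inv_inv : ∀ a : S, a⁻¹⁻¹ = a
  mul_inv_rev : ∀ a b : S, (a * b)⁻¹ = b⁻¹ * a⁻¹
  mul_inv_self_mul : ∀ a : S, a * a⁻¹ * a = a
  idem_comm : ∀ e f : S, e * e = e → f * f = f → e * f = f * e

/-- F-inverse monoids in the enriched signature `(·, ⁻¹, ᵐ, 1)`. -/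
class FInverseMonoid (S : Type u) extends InverseMonoid S where
  mx : S → S
  mx_isMaxOp : IsMaxOp mx

/-- The max-operation of an F-inverse monoid. -/
def mx {S : Type u} [FInverseMonoid S] : S → S := FInverseMonoid.mx

section InverseMonoidLemmas

variable {S : Type u} [InverseMonoid S]

lemma mul_inv_idem (a : S) : (a * a⁻¹) * (a * a⁻¹) = a * a⁻¹ := by
  conv_lhs => rw [← mul_assoc, InverseMonoid.mul_inv_self_mul]

lemma inv_mul_self_mul (a : S) : a⁻¹ * a * a⁻¹ = a⁻¹ := by
  have h := InverseMonoid.mul_inv_self_mul (a := a⁻¹)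
  rwa [InverseMonoid.inv_inv] at h

lemma inv_mul_idem (a : S) : (a⁻¹ * a) * (a⁻¹ * a) = a⁻¹ * a := by
  conv_lhs => rw [← mul_assoc, inv_mul_self_mul]

lemma idem_inv {e : S} (he : e * e = e) : e⁻¹ = e := by
  have h1 : e⁻¹ * e⁻¹ = e⁻¹ := by rw [← InverseMonoid.mul_inv_rev, he]
  have hc : e * e⁻¹ = e⁻¹ * e := InverseMonoid.idem_comm e e⁻¹ he h1
  have h2 : e = e * e⁻¹ := by
    calc e = e * e⁻¹ * e := (InverseMonoid.mul_inv_self_mul e).symm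
    _ = e * (e⁻¹ * e) := mul_assoc _ _ _
    _ = e * (e * e⁻¹) := by rw [hc]
    _ = e * e * e⁻¹ := (mul_assoc _ _ _).symm
    _ = e * e⁻¹ := by rw [he]
  have h3 : e⁻¹ = e⁻¹ * e := by
    calc e⁻¹ = e⁻¹ * e * e⁻¹ := (inv_mul_self_mul e).symm
    _ = e⁻¹ * (e * e⁻¹) := mul_assoc _ _ _
    _ = e⁻¹ * (e⁻¹ * e) := by rw [hc]
    _ = e⁻¹ * e⁻¹ * e := (mul_assoc _ _ _).symm
    _ = e⁻¹ * e := by rw [h1]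
  rw [h3, ← hc, ← h2]

lemma idem_mul_idem {e f : S} (he : e * e = e) (hf : f * f = f) :
    (e * f) * (e * f) = e * f := by
  calc (e * f) * (e * f) = e * (f * (e * f)) := mul_assoc _ _ _
  _ = e * (f * e * f) := by rw [← mul_assoc f e f]
  _ = e * (e * f * f) := by rw [← InverseMonoid.idem_comm e f he hf]
  _ = e * (e * (f * f)) := by rw [mul_assoc e f f]
  _ = e * (e * f) := by rw [hf]
  _ = e * e * f := (mul_assoc _ _ _).symm
  _ = e * f := by rw [he]

lemma sigma_refl (a : S) : sigma a a := ⟨1, one_mul 1, rfl⟩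

lemma sigma_symm {a b : S} (h : sigma a b) : sigma b a := by
  obtain ⟨e, he, hab⟩ := h
  exact ⟨e, he, hab.symm⟩

lemma sigma_trans {a b c : S} (h₁ : sigma a b) (h₂ : sigma b c) : sigma a c := by
  obtain ⟨e, he, h1⟩ := h₁
  obtain ⟨f, hf, h2⟩ := h₂
  refine ⟨e * f, idem_mul_idem he hf, ?_⟩
  calc a * (e * f) = a * e * f := (mul_assoc _ _ _).symm
  _ = b * e * f := by rw [h1]
  _ = b * (e * f) := mul_assoc _ _ _
  _ = b * (f * e) := by rw [InverseMonoid.idem_comm e f he hf]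
  _ = b * f * e := (mul_assoc _ _ _).symm
  _ = c * f * e := by rw [h2]
  _ = c * (f * e) := mul_assoc _ _ _
  _ = c * (e * f) := by rw [InverseMonoid.idem_comm e f he hf]

lemma sigma_mul_left {a b : S} (c : S) (h : sigma a b) : sigma (c * a) (c * b) := by
  obtain ⟨e, he, hab⟩ := h
  exact ⟨e, he, by rw [mul_assoc, hab, ← mul_assoc]⟩

lemma inner_lemma {e : S} (he : e * e = e) (a : S) :
    a⁻¹ * (a * e * a⁻¹) = e * a⁻¹ := by
  calc a⁻¹ * (a * e * a⁻¹) = a⁻¹ * (a * e) * a⁻¹ := by rw [← mul_assoc a⁻¹ (a * e) a⁻¹]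
  _ = a⁻¹ * a * e * a⁻¹ := by rw [← mul_assoc a⁻¹ a e]
  _ = e * (a⁻¹ * a) * a⁻¹ := by rw [InverseMonoid.idem_comm (a⁻¹ * a) e (inv_mul_idem a) he]
  _ = e * (a⁻¹ * a * a⁻¹) := by rw [mul_assoc e (a⁻¹ * a) a⁻¹]
  _ = e * a⁻¹ := by rw [inv_mul_self_mul]

lemma sigma_inv {a b : S} (h : sigma a b) : sigma a⁻¹ b⁻¹ := by
  obtain ⟨e, he, hab⟩ := h
  have key5 : e * a⁻¹ = e * b⁻¹ := by
    have h' : (a * e)⁻¹ = (b * e)⁻¹ := by rw [hab]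
    rwa [InverseMonoid.mul_inv_rev, InverseMonoid.mul_inv_rev, idem_inv he] at h'
  have key1 : (a * e * a⁻¹) * (a * e * a⁻¹) = a * e * a⁻¹ := by
    calc (a * e * a⁻¹) * (a * e * a⁻¹) = a * e * (a⁻¹ * (a * e * a⁻¹)) := mul_assoc _ _ _
    _ = a * e * (e * a⁻¹) := by rw [inner_lemma he a]
    _ = a * e * e * a⁻¹ := (mul_assoc _ _ _).symm
    _ = a * (e * e) * a⁻¹ := by rw [mul_assoc a e e]
    _ = a * e * a⁻¹ := by rw [he]
  have key3 : a * e * a⁻¹ = b * e * b⁻¹ := by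
    calc a * e * a⁻¹ = a * (e * e) * a⁻¹ := by rw [he]
    _ = a * e * e * a⁻¹ := by rw [← mul_assoc a e e]
    _ = a * e * (e * a⁻¹) := mul_assoc _ _ _
    _ = a * e * (e * b⁻¹) := by rw [key5]
    _ = b * e * (e * b⁻¹) := by rw [hab]
    _ = b * e * e * b⁻¹ := (mul_assoc _ _ _).symm
    _ = b * (e * e) * b⁻¹ := by rw [mul_assoc b e e]
    _ = b * e * b⁻¹ := by rw [he]
  refine ⟨a * e * a⁻¹, key1, ?_⟩
  rw [inner_lemma he a, key5, key3, inner_lemma he b]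

lemma sigma_mul_right {a b : S} (c : S) (h : sigma a b) : sigma (a * c) (b * c) := by
  have h1 := sigma_mul_left c⁻¹ (sigma_inv h)
  have h2 := sigma_inv h1
  rwa [InverseMonoid.mul_inv_rev c⁻¹ a⁻¹, InverseMonoid.mul_inv_rev c⁻¹ b⁻¹,
    InverseMonoid.inv_inv, InverseMonoid.inv_inv, InverseMonoid.inv_inv] at h2

instance sigmaSetoid (S : Type u) [InverseMonoid S] : Setoid S where
  r := sigma
  iseqv := ⟨sigma_refl, sigma_symm, sigma_trans⟩

/-- The maximum group quotient `S/σ`. -/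
def GQuot (S : Type u) [InverseMonoid S] : Type u := Quotient (sigmaSetoid S)

/-- The σ-class of an element, as an element of the maximum group quotient. -/
def σclass {S : Type u} [InverseMonoid S] (a : S) : GQuot S := Quotient.mk (sigmaSetoid S) a

instance (S : Type u) [InverseMonoid S] : Group (GQuot S) where
  mul := Quotient.map₂ (· * ·) (fun _ _ h₁ _ _ h₂ =>
    sigma_trans (sigma_mul_right _ h₁) (sigma_mul_left _ h₂))
  one := σclass 1
  inv := Quotient.map (·⁻¹) (fun _ _ h => sigma_inv h)
  mul_assoc := by
    intro a b c
    induction a using Quotient.ind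
    induction b using Quotient.ind
    induction c using Quotient.ind
    exact congrArg (Quotient.mk _) (mul_assoc _ _ _)
  one_mul := by
    intro a
    induction a using Quotient.ind
    exact congrArg (Quotient.mk _) (one_mul _)
  mul_one := by
    intro a
    induction a using Quotient.ind
    exact congrArg (Quotient.mk _) (mul_one _)
  inv_mul_cancel := by
    intro a
    induction a using Quotient.ind with
    | _ a =>
      refine Quotient.sound ⟨a⁻¹ * a, inv_mul_idem a, ?_⟩
      rw [one_mul]
      exact inv_mul_idem a

end InverseMonoidLemmas


section Graphs

variable {G : Type u} [Group G] {X : Type v}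

/-- A subgraph of the Cayley graph `Cay(G)` of the `X`-generated group `G` (with assignment
mapping `φ : X → G`), represented by its set of vertices and its set of positive edges:
the positive edge `(g, x)` goes from `g` to `g * φ x` and carries the label `x`; every
subgraph closed under edge inversion is uniquely determined by this data. -/
structure Subgraph (φ : X → G) : Type (max u v) where
  verts : Set G
  edges : Set (G × X)
  src_mem : ∀ e ∈ edges, Prod.fst e ∈ verts
  tgt_mem : ∀ e ∈ edges, e.1 * φ e.2 ∈ verts

namespace Subgraph

variable {φ : X → G}

lemma ext' {Γ Δ : Subgraph φ} (hv : Γ.verts = Δ.verts) (he : Γ.edges = Δ.edges) : Γ = Δ := by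
  cases Γ; cases Δ; cases hv; cases he; rfl

/-- Union of subgraphs. -/
def union (Γ Δ : Subgraph φ) : Subgraph φ where
  verts := Γ.verts ∪ Δ.verts
  edges := Γ.edges ∪ Δ.edges
  src_mem := by
    intro e he
    rcases he with h | h
    · exact Set.mem_union_left _ (Γ.src_mem e h)
    · exact Set.mem_union_right _ (Δ.src_mem e h)
  tgt_mem := by
    intro e he
    rcases he with h | h
    · exact Set.mem_union_left _ (Γ.tgt_mem e h)
    · exact Set.mem_union_right _ (Δ.tgt_mem e h)

instance : Union (Subgraph φ) := ⟨union⟩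

@[simp] lemma union_verts (Γ Δ : Subgraph φ) : (Γ ∪ Δ).verts = Γ.verts ∪ Δ.verts := rfl
@[simp] lemma union_edges (Γ Δ : Subgraph φ) : (Γ ∪ Δ).edges = Γ.edges ∪ Δ.edges := rfl

/-- Left translation of a subgraph by a group element. -/
def smul (g : G) (Γ : Subgraph φ) : Subgraph φ where
  verts := (g * ·) '' Γ.verts
  edges := (fun e => (g * e.1, e.2)) '' Γ.edges
  src_mem := by
    rintro e ⟨e', he', rfl⟩
    exact ⟨e'.1, Γ.src_mem e' he', rfl⟩
  tgt_mem := by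
    rintro e ⟨e', he', rfl⟩
    exact ⟨e'.1 * φ e'.2, Γ.tgt_mem e' he', (mul_assoc g e'.1 (φ e'.2)).symm⟩

instance : SMul G (Subgraph φ) := ⟨smul⟩

@[simp] lemma smul_verts (g : G) (Γ : Subgraph φ) : (g • Γ).verts = (g * ·) '' Γ.verts := rfl
@[simp] lemma smul_edges (g : G) (Γ : Subgraph φ) :
    (g • Γ).edges = (fun e : G × X => (g * e.1, e.2)) '' Γ.edges := rfl

/-- The subgraph relation. -/
instance : HasSubset (Subgraph φ) := ⟨fun Γ Δ => Γ.verts ⊆ Δ.verts ∧ Γ.edges ⊆ Δ.edges⟩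

lemma subset_iff (Γ Δ : Subgraph φ) : Γ ⊆ Δ ↔ Γ.verts ⊆ Δ.verts ∧ Γ.edges ⊆ Δ.edges := Iff.rfl

/-- Finiteness of a subgraph. -/
def IsFinite (Γ : Subgraph φ) : Prop := Γ.verts.Finite ∧ Γ.edges.Finite

/-- A subgraph has no isolated vertices if each of its vertices is an endpoint of one
of its edges. -/
def NoIsolated (Γ : Subgraph φ) : Prop :=
  ∀ v ∈ Γ.verts, ∃ e ∈ Γ.edges, v = e.1 ∨ v = e.1 * φ e.2

/-- `Ed(Γ)`: the subgraph spanned by the edges of `Γ`, i.e. `Γ` with all isolated vertices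
removed. -/
def ed (Γ : Subgraph φ) : Subgraph φ where
  verts := {v | ∃ e ∈ Γ.edges, v = e.1 ∨ v = e.1 * φ e.2}
  edges := Γ.edges
  src_mem := fun e he => ⟨e, he, Or.inl rfl⟩
  tgt_mem := fun e he => ⟨e, he, Or.inr rfl⟩

lemma ed_finite {Γ : Subgraph φ} (h : Γ.IsFinite) : Γ.ed.IsFinite := by
  constructor
  · have hsub : Γ.ed.verts ⊆
        (fun e : G × X => e.1) '' Γ.edges ∪ (fun e : G × X => e.1 * φ e.2) '' Γ.edges := by
      rintro v ⟨e, he, rfl | rfl⟩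
      · exact Set.mem_union_left _ ⟨e, he, rfl⟩
      · exact Set.mem_union_right _ ⟨e, he, rfl⟩
    exact ((h.2.image _).union (h.2.image _)).subset hsub
  · exact h.2

lemma ed_noIsolated (Γ : Subgraph φ) : Γ.ed.NoIsolated := fun _ hv => hv

end Subgraph

open Subgraph

variable {φ : X → G}

/-- The subgraph with the single vertex `g` and no edges. -/
def vertexG (φ : X → G) (g : G) : Subgraph φ :=
  ⟨{g}, ∅, by simp, by simp⟩

/-- `Δ_g`: the edgeless subgraph with vertices `1` and `g`. -/
def deltaG (φ : X → G) (g : G) : Subgraph φ :=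
  ⟨{1, g}, ∅, by simp, by simp⟩

/-- The subgraph spanned by a single (positive) edge. -/
def edgeG (φ : X → G) (e : G × X) : Subgraph φ where
  verts := {e.1, e.1 * φ e.2}
  edges := {e}
  src_mem := by
    intro e' he'
    rw [Set.mem_singleton_iff] at he'
    subst he'
    exact Set.mem_insert _ _
  tgt_mem := by
    intro e' he'
    rw [Set.mem_singleton_iff] at he'
    subst he'
    exact Set.mem_insert_of_mem _ rfl

/-- The empty subgraph. -/
def emptyG (φ : X → G) : Subgraph φ := ⟨∅, ∅, by simp, by simp⟩

lemma edgeG_noIsolated (φ : X → G) (e : G × X) : (edgeG φ e).NoIsolated := by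
  intro v hv
  refine ⟨e, Set.mem_singleton e, ?_⟩
  simpa [edgeG] using hv

/-- Two vertices are adjacent in `Γ` if they are connected by an edge of `Γ`. -/
def adj (Γ : Subgraph φ) (u v : G) : Prop :=
  ∃ e ∈ Γ.edges, (u = e.1 ∧ v = e.1 * φ e.2) ∨ (v = e.1 ∧ u = e.1 * φ e.2)

/-- A subgraph is connected if any two of its vertices are joined by a path running in it. -/
def Connected (Γ : Subgraph φ) : Prop :=
  ∀ u ∈ Γ.verts, ∀ v ∈ Γ.verts, Relation.ReflTransGen (adj Γ) u v

lemma adj_mono {Γ Δ : Subgraph φ} (h : Γ.edges ⊆ Δ.edges) {u v : G} (ha : adj Γ u v) :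
    adj Δ u v := by
  obtain ⟨e, he, hc⟩ := ha
  exact ⟨e, h he, hc⟩

lemma Connected.union {Γ Δ : Subgraph φ} (hΓ : Connected Γ) (hΔ : Connected Δ) (w : G)
    (hw₁ : w ∈ Γ.verts) (hw₂ : w ∈ Δ.verts) : Connected (Γ ∪ Δ) := by
  have hsΓ : Γ.edges ⊆ (Γ ∪ Δ).edges := by
    rw [union_edges]; exact Set.subset_union_left
  have hsΔ : Δ.edges ⊆ (Γ ∪ Δ).edges := by
    rw [union_edges]; exact Set.subset_union_right
  have mΓ : ∀ {p q : G}, Relation.ReflTransGen (adj Γ) p q →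
      Relation.ReflTransGen (adj (Γ ∪ Δ)) p q :=
    fun h => Relation.ReflTransGen.mono (fun _ _ h' => adj_mono hsΓ h') _ _ h
  have mΔ : ∀ {p q : G}, Relation.ReflTransGen (adj Δ) p q →
      Relation.ReflTransGen (adj (Γ ∪ Δ)) p q :=
    fun h => Relation.ReflTransGen.mono (fun _ _ h' => adj_mono hsΔ h') _ _ h
  intro u hu v hv
  rw [union_verts] at hu hv
  rcases hu with hu | hu <;> rcases hv with hv | hv
  · exact mΓ (hΓ u hu v hv)
  · exact (mΓ (hΓ u hu w hw₁)).trans (mΔ (hΔ w hw₂ v hv))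
  · exact (mΔ (hΔ u hu w hw₂)).trans (mΓ (hΓ w hw₁ v hv))
  · exact mΔ (hΔ u hu v hv)

lemma Connected.smul {Γ : Subgraph φ} (g : G) (h : Connected Γ) : Connected (g • Γ) := by
  intro u hu v hv
  rw [smul_verts] at hu hv
  obtain ⟨u', hu', rfl⟩ := hu
  obtain ⟨v', hv', rfl⟩ := hv
  refine Relation.ReflTransGen.lift (fun z => g * z) ?_ _ _ (h u' hu' v' hv')
  rintro p q ⟨e, he, hc⟩
  refine ⟨(g * e.1, e.2), ?_, ?_⟩
  · rw [smul_edges]; exact ⟨e, he, rfl⟩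
  · rcases hc with ⟨rfl, rfl⟩ | ⟨rfl, rfl⟩
    · exact Or.inl ⟨rfl, (mul_assoc _ _ _).symm⟩
    · exact Or.inr ⟨rfl, (mul_assoc _ _ _).symm⟩

lemma Subgraph.NoIsolated.union {Γ Δ : Subgraph φ} (hΓ : Γ.NoIsolated) (hΔ : Δ.NoIsolated) :
    (Γ ∪ Δ).NoIsolated := by
  intro v hv
  rw [union_verts] at hv
  rcases hv with hv | hv
  · obtain ⟨e, he, hor⟩ := hΓ v hv
    exact ⟨e, by rw [union_edges]; exact Set.mem_union_left _ he, hor⟩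
  · obtain ⟨e, he, hor⟩ := hΔ v hv
    exact ⟨e, by rw [union_edges]; exact Set.mem_union_right _ he, hor⟩

lemma Subgraph.NoIsolated.smul {Γ : Subgraph φ} (g : G) (h : Γ.NoIsolated) :
    (g • Γ).NoIsolated := by
  intro v hv
  rw [smul_verts] at hv
  obtain ⟨u, hu, rfl⟩ := hv
  obtain ⟨e, he, hor⟩ := h u hu
  refine ⟨(g * e.1, e.2), by rw [smul_edges]; exact ⟨e, he, rfl⟩, ?_⟩
  rcases hor with rfl | rfl
  · exact Or.inl rfl
  · exact Or.inr (mul_assoc _ _ _).symm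

end Graphs


section Expansions

variable {G : Type u} [Group G] {X : Type v} {φ : X → G}

open Subgraph

/-- `F(G)`: pairs `(Γ, g)` where `Γ` is a finite subgraph of `Cay(G)` having `1` and `g`
among its vertices. -/
structure FExp (φ : X → G) : Type (max u v) where
  graph : Subgraph φ
  elt : G
  finite : graph.IsFinite
  one_mem : (1 : G) ∈ graph.verts
  elt_mem : elt ∈ graph.verts

namespace FExp

lemma ext' {a b : FExp φ} (hg : a.graph = b.graph) (he : a.elt = b.elt) : a = b := by
  cases a; cases b; cases hg; cases he; rfl

instance : Mul (FExp φ) :=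
  ⟨fun a b =>
    { graph := a.graph ∪ a.elt • b.graph
      elt := a.elt * b.elt
      finite := ⟨by
          rw [union_verts, smul_verts]
          exact a.finite.1.union (b.finite.1.image _),
        by
          rw [union_edges, smul_edges]
          exact a.finite.2.union (b.finite.2.image _)⟩
      one_mem := by
        rw [union_verts]
        exact Set.mem_union_left _ a.one_mem
      elt_mem := by
        rw [union_verts]
        refine Set.mem_union_right _ ?_
        rw [smul_verts]
        exact ⟨b.elt, b.elt_mem, rfl⟩ }⟩

@[simp] lemma mul_graph (a b : FExp φ) : (a * b).graph = a.graph ∪ a.elt • b.graph := rfl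
@[simp] lemma mul_elt (a b : FExp φ) : (a * b).elt = a.elt * b.elt := rfl

instance : One (FExp φ) :=
  ⟨{ graph := deltaG φ 1
     elt := 1
     finite := ⟨(Set.finite_singleton (1 : G)).insert 1, Set.finite_empty⟩
     one_mem := Set.mem_insert 1 _
     elt_mem := Set.mem_insert 1 _ }⟩

@[simp] lemma one_graph : (1 : FExp φ).graph = deltaG φ 1 := rfl
@[simp] lemma one_elt : (1 : FExp φ).elt = 1 := rfl

instance : Inv (FExp φ) :=
  ⟨fun a =>
    { graph := a.elt⁻¹ • a.graph
      elt := a.elt⁻¹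
      finite := ⟨by rw [smul_verts]; exact a.finite.1.image _,
        by rw [smul_edges]; exact a.finite.2.image _⟩
      one_mem := by
        rw [smul_verts]
        exact ⟨a.elt, a.elt_mem, inv_mul_cancel a.elt⟩
      elt_mem := by
        rw [smul_verts]
        exact ⟨1, a.one_mem, mul_one _⟩ }⟩

@[simp] lemma inv_graph (a : FExp φ) : (a⁻¹).graph = a.elt⁻¹ • a.graph := rfl
@[simp] lemma inv_elt (a : FExp φ) : (a⁻¹).elt = a.elt⁻¹ := rfl

end FExp

/-- The element `(Δ_g, g)` of `F(G)`. -/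
def maxElt (φ : X → G) (g : G) : FExp φ where
  graph := deltaG φ g
  elt := g
  finite := ⟨(Set.finite_singleton g).insert 1, Set.finite_empty⟩
  one_mem := Set.mem_insert 1 _
  elt_mem := Set.mem_insert_of_mem _ rfl

/-- The max-operation `(Γ, g) ↦ (Δ_g, g)` on `F(G)`. -/
def mxOp (a : FExp φ) : FExp φ := maxElt φ a.elt

/-- The generator `(Γ_x, x_G)` of `F(G)`. -/
def genElt (φ : X → G) (x : X) : FExp φ where
  graph := edgeG φ (1, x)
  elt := φ x
  finite := ⟨(Set.finite_singleton _).insert _, Set.finite_singleton _⟩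
  one_mem := Set.mem_insert 1 _
  elt_mem := by simp [edgeG]

/-- `M(G)`: the Margolis–Meakin expansion; pairs `(Γ, g)` where `Γ` is a finite *connected*
subgraph of `Cay(G)` having `1` and `g` among its vertices. -/
structure MExp (φ : X → G) : Type (max u v) where
  graph : Subgraph φ
  elt : G
  finite : graph.IsFinite
  connected : Connected graph
  one_mem : (1 : G) ∈ graph.verts
  elt_mem : elt ∈ graph.verts

namespace MExp

instance : Mul (MExp φ) :=
  ⟨fun a b =>
    { graph := a.graph ∪ a.elt • b.graph
      elt := a.elt * b.elt
      finite := ⟨by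
          rw [union_verts, smul_verts]
          exact a.finite.1.union (b.finite.1.image _),
        by
          rw [union_edges, smul_edges]
          exact a.finite.2.union (b.finite.2.image _)⟩
      connected := by
        refine Connected.union a.connected (Connected.smul a.elt b.connected) a.elt a.elt_mem ?_
        rw [smul_verts]
        exact ⟨1, b.one_mem, mul_one _⟩
      one_mem := by
        rw [union_verts]
        exact Set.mem_union_left _ a.one_mem
      elt_mem := by
        rw [union_verts]
        refine Set.mem_union_right _ ?_
        rw [smul_verts]
        exact ⟨b.elt, b.elt_mem, rfl⟩ }⟩

end MExp

/-- `P(G)`: pairs `(Γ, g)` where `Γ` is a finite subgraph of `Cay(G)` without isolated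
vertices and `g ∈ G` (a model of the semidirect product of the semilattice of such
subgraphs by `G`). -/
structure PExp (φ : X → G) : Type (max u v) where
  graph : Subgraph φ
  elt : G
  finite : graph.IsFinite
  noIsolated : graph.NoIsolated

namespace PExp

lemma ext' {a b : PExp φ} (hg : a.graph = b.graph) (he : a.elt = b.elt) : a = b := by
  cases a; cases b; cases hg; cases he; rfl

instance : Mul (PExp φ) :=
  ⟨fun a b =>
    { graph := a.graph ∪ a.elt • b.graph
      elt := a.elt * b.elt
      finite := ⟨by
          rw [union_verts, smul_verts]
          exact a.finite.1.union (b.finite.1.image _),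
        by
          rw [union_edges, smul_edges]
          exact a.finite.2.union (b.finite.2.image _)⟩
      noIsolated := a.noIsolated.union (b.noIsolated.smul a.elt) }⟩

@[simp] lemma mul_graph (a b : PExp φ) : (a * b).graph = a.graph ∪ a.elt • b.graph := rfl
@[simp] lemma mul_elt (a b : PExp φ) : (a * b).elt = a.elt * b.elt := rfl

instance : One (PExp φ) :=
  ⟨{ graph := emptyG φ
     elt := 1
     finite := ⟨Set.finite_empty, Set.finite_empty⟩
     noIsolated := by intro v hv; simp [emptyG] at hv }⟩

@[simp] lemma one_graph : (1 : PExp φ).graph = emptyG φ := rfl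
@[simp] lemma one_elt : (1 : PExp φ).elt = 1 := rfl

instance : Inv (PExp φ) :=
  ⟨fun a =>
    { graph := a.elt⁻¹ • a.graph
      elt := a.elt⁻¹
      finite := ⟨by rw [smul_verts]; exact a.finite.1.image _,
        by rw [smul_edges]; exact a.finite.2.image _⟩
      noIsolated := a.noIsolated.smul _ }⟩

@[simp] lemma inv_graph (a : PExp φ) : (a⁻¹).graph = a.elt⁻¹ • a.graph := rfl
@[simp] lemma inv_elt (a : PExp φ) : (a⁻¹).elt = a.elt⁻¹ := rfl

end PExp

/-- The max-operation `(Γ, g) ↦ (∅, g)` on `P(G)`. -/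
def pMax (a : PExp φ) : PExp φ where
  graph := emptyG φ
  elt := a.elt
  finite := ⟨Set.finite_empty, Set.finite_empty⟩
  noIsolated := by intro v hv; simp [emptyG] at hv

/-- The generator `(Γ_x, x_G)` of `P(G)`. -/
def genEltP (φ : X → G) (x : X) : PExp φ where
  graph := edgeG φ (1, x)
  elt := φ x
  finite := ⟨(Set.finite_singleton _).insert _, Set.finite_singleton _⟩
  noIsolated := edgeG_noIsolated φ (1, x)

/-- The canonical map `F(G) → P(G)`, `(Γ, g) ↦ (Ed(Γ), g)`. -/
def edMap (a : FExp φ) : PExp φ where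
  graph := a.graph.ed
  elt := a.elt
  finite := ed_finite a.finite
  noIsolated := a.graph.ed_noIsolated

/-- The relation `θ` on `F(G)`: `(Γ,g) θ (Ξ,h)` iff `g = h` and `Ed(Γ) = Ed(Ξ)`. -/
def thetaRel (φ : X → G) (a b : FExp φ) : Prop := a.elt = b.elt ∧ a.graph.ed = b.graph.ed

end Expansions

section Terms

variable {X : Type v}

/-- Terms of the term algebra `I^m_X` in their (unique) normal form
`u₀ · m(v₁) · u₁ ⋯ u_{n-1} · m(vₙ) · uₙ` with `uᵢ, vⱼ` words in the free monoid with
involution `I_X` on `X` (represented as lists over `X ⊕ X`, where `inl x` stands for `x`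
and `inr x` for `x⁻¹`): the first component is `u₀`, and the second lists the pairs
`(vᵢ, uᵢ)`. -/
abbrev MTerm (X : Type v) := List (X ⊕ X) × List (List (X ⊕ X) × List (X ⊕ X))

/-- Value of a letter of `X ⊔ X⁻¹`. -/
def letterVal {M : Type w} [Monoid M] [Inv M] (f : X → M) : X ⊕ X → M
  | Sum.inl x => f x
  | Sum.inr x => (f x)⁻¹

/-- Value of a word of `I_X`. -/
def wordVal {M : Type w} [Monoid M] [Inv M] (f : X → M) (u : List (X ⊕ X)) : M :=
  (u.map (letterVal f)).prod

/-- Value `[t]` of a term `t ∈ I^m_X` under the assignment `f` of the generators,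
where `mop` is interpreted as the operation `m`. -/
def termVal {M : Type w} [Monoid M] [Inv M] (f : X → M) (mop : M → M) (t : MTerm X) : M :=
  wordVal f t.1 * (t.2.map (fun p => mop (wordVal f p.1) * wordVal f p.2)).prod

end Terms

section Journeys

variable {G : Type u} [Group G] {X : Type v}

/-- The subgraph of `Cay(G)` spanned by the path starting at `g` with label the given word;
for the empty word it is the single vertex `g`. -/
def pathGraph (φ : X → G) : G → List (X ⊕ X) → Subgraph φ
  | g, [] => vertexG φ g
  | g, Sum.inl x :: u => edgeG φ (g, x) ∪ pathGraph φ (g * φ x) u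
  | g, Sum.inr x :: u => edgeG φ (g * (φ x)⁻¹, x) ∪ pathGraph φ (g * (φ x)⁻¹) u

/-- The subgraph of `Cay(G)` spanned by the journey `j_g(w)` induced by the term
`w = u₀ · m(v₁) · u₁ ⋯ · m(vₙ) · uₙ` starting at `g`: traverse the path labelled `u₀`
from `g`, jump to `g·[u₀v₁]`, traverse the path labelled `u₁`, and so on. -/
def journeyGraph (φ : X → G) : G → List (X ⊕ X) → List (List (X ⊕ X) × List (X ⊕ X)) →
    Subgraph φ
  | g, u, [] => pathGraph φ g u
  | g, u, (v, u') :: rest =>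
      pathGraph φ g u ∪ journeyGraph φ (g * wordVal φ u * wordVal φ v) u' rest

end Journeys

/-! The idempotents `a·a⁻¹` and `a⁻¹·a` of `F(G)` are `(Γ, 1)` and `(g⁻¹·Γ, 1)`, which gives
`R` and `L`, and `D` is their composite. For `J ⊆ D`: if `a = u·b·v` then `Γ_a` contains a
translate of `Γ_b`; since a finite subgraph cannot properly contain a translate of itself,
mutual containment of translates forces `Γ_a = k·Γ_b`. -/

section Green

variable {G : Type u} [Group G] {X : Type v} {φ : X → G}

open Subgraph

lemma _root_.Set.Finite.image_eq_of_image_subset {α : Type w} {s : Set α} {f : α → α}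
    (hs : s.Finite) (hf : Function.Injective f) (h : f '' s ⊆ s) : f '' s = s :=
  ((hs.injOn_iff_bijOn_of_mapsTo (Set.mapsTo_iff_image_subset.mpr h)).mp hf.injOn).image_eq

namespace Subgraph

instance : MulAction G (Subgraph φ) where
  one_smul Γ := Subgraph.ext' (by simp) (by simp)
  mul_smul g h Γ := Subgraph.ext' (by simp only [smul_verts, Set.image_image, mul_assoc])
    (by simp only [smul_edges, Set.image_image, mul_assoc])

@[simp] lemma union_self (Γ : Subgraph φ) : Γ ∪ Γ = Γ :=
  Subgraph.ext' (Set.union_self _) (Set.union_self _)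

lemma subset_antisymm {Γ Δ : Subgraph φ} (h₁ : Γ ⊆ Δ) (h₂ : Δ ⊆ Γ) : Γ = Δ :=
  Subgraph.ext' (h₁.1.antisymm h₂.1) (h₁.2.antisymm h₂.2)

lemma subset_trans {Γ Δ Θ : Subgraph φ} (h₁ : Γ ⊆ Δ) (h₂ : Δ ⊆ Θ) : Γ ⊆ Θ :=
  ⟨h₁.1.trans h₂.1, h₁.2.trans h₂.2⟩

lemma smul_subset_smul (g : G) {Γ Δ : Subgraph φ} (h : Γ ⊆ Δ) : g • Γ ⊆ g • Δ :=
  ⟨Set.image_mono h.1, Set.image_mono h.2⟩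

lemma smul_eq_of_smul_subset {g : G} {Γ : Subgraph φ} (hΓ : Γ.IsFinite) (h : g • Γ ⊆ Γ) :
    g • Γ = Γ :=
  Subgraph.ext' (hΓ.1.image_eq_of_image_subset (mul_right_injective g) h.1)
    (hΓ.2.image_eq_of_image_subset (fun _ _ he =>
      Prod.ext (mul_left_cancel (Prod.mk.inj he).1) (Prod.mk.inj he).2) h.2)

lemma eq_smul_of_smul_subset_of_smul_subset {g h : G} {Γ Δ : Subgraph φ} (hΓ : Γ.IsFinite)
    (hΔΓ : g • Δ ⊆ Γ) (hΓΔ : h • Γ ⊆ Δ) : Γ = g • Δ := by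
  have hfix : (g * h) • Γ = Γ :=
    smul_eq_of_smul_subset hΓ (mul_smul g h Γ ▸ subset_trans (smul_subset_smul g hΓΔ) hΔΓ)
  refine subset_antisymm ?_ hΔΓ
  rw [← hfix, mul_smul]
  exact smul_subset_smul g hΓΔ

end Subgraph

namespace FExp

lemma ext_iff' {a b : FExp φ} : a = b ↔ a.graph = b.graph ∧ a.elt = b.elt :=
  ⟨fun h => h ▸ ⟨rfl, rfl⟩, fun h => ext' h.1 h.2⟩

def withElt (a : FExp φ) (g : G) (hg : g ∈ a.graph.verts) : FExp φ :=
  ⟨a.graph, g, a.finite, a.one_mem, hg⟩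

@[simp] lemma mul_inv_graph (a : FExp φ) : (a * a⁻¹).graph = a.graph := by
  simp [smul_smul]

lemma mul_inv_eq_mul_inv_iff (a b : FExp φ) : a * a⁻¹ = b * b⁻¹ ↔ a.graph = b.graph := by
  simp [ext_iff']

lemma inv_mul_eq_inv_mul_iff (a b : FExp φ) :
    a⁻¹ * a = b⁻¹ * b ↔ a.elt⁻¹ • a.graph = b.elt⁻¹ • b.graph := by
  simp [ext_iff']

lemma greenD_iff (a b : FExp φ) :
    (∃ c : FExp φ, a * a⁻¹ = c * c⁻¹ ∧ c⁻¹ * c = b⁻¹ * b) ↔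
      ∃ k : G, a.graph = k • b.graph := by
  simp only [mul_inv_eq_mul_inv_iff, inv_mul_eq_inv_mul_iff]
  constructor
  · rintro ⟨c, hR, hL⟩
    refine ⟨c.elt * b.elt⁻¹, ?_⟩
    rw [hR, mul_smul, ← hL, smul_inv_smul]
  · rintro ⟨k, hk⟩
    refine ⟨a.withElt (k * b.elt) (hk ▸ ⟨b.elt, b.elt_mem, rfl⟩), rfl, ?_⟩
    simp [withElt, hk, smul_smul]

lemma smul_graph_subset_of_eq_mul_mul {a b u v : FExp φ} (h : a = u * b * v) :
    u.elt • b.graph ⊆ a.graph := by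
  subst h
  exact ⟨fun _ hx => Or.inl (Or.inr hx), fun _ he => Or.inl (Or.inr he)⟩

/-- Witness: `a = (Γ_a, k) · b · (c⁻¹ · a)` with `c = (Γ_a, k · b.elt)`. -/
lemma exists_eq_mul_mul_of_graph_eq_smul {a b : FExp φ} {k : G} (hk : a.graph = k • b.graph) :
    ∃ u v : FExp φ, a = u * b * v := by
  have hk_mem : k ∈ a.graph.verts := hk ▸ ⟨1, b.one_mem, mul_one k⟩
  have hkb_mem : k * b.elt ∈ a.graph.verts := hk ▸ ⟨b.elt, b.elt_mem, rfl⟩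
  refine ⟨a.withElt k hk_mem, (a.withElt (k * b.elt) hkb_mem)⁻¹ * a, ext' ?_ ?_⟩
  · simp [withElt, ← hk, smul_smul]
  · simp [withElt, mul_assoc]

lemma greenJ_iff_greenD (a b : FExp φ) :
    ((∃ u v : FExp φ, a = u * b * v) ∧ (∃ u v : FExp φ, b = u * a * v)) ↔
      ∃ c : FExp φ, a * a⁻¹ = c * c⁻¹ ∧ c⁻¹ * c = b⁻¹ * b := by
  rw [greenD_iff]
  constructor
  · rintro ⟨⟨u, _, hu⟩, ⟨u', _, hu'⟩⟩
    exact ⟨u.elt, eq_smul_of_smul_subset_of_smul_subset a.finite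
      (smul_graph_subset_of_eq_mul_mul hu) (smul_graph_subset_of_eq_mul_mul hu')⟩
  · rintro ⟨k, hk⟩
    exact ⟨exists_eq_mul_mul_of_graph_eq_smul hk,
      exists_eq_mul_mul_of_graph_eq_smul (eq_inv_smul_iff.mpr hk.symm)⟩

end FExp

end Green

theorem statement10_general {G : Type u} [Group G] {X : Type v} (φ : X → G) (a b : FExp φ) :
    (a * a⁻¹ = b * b⁻¹ ↔ a.graph = b.graph) ∧
    (a⁻¹ * a = b⁻¹ * b ↔ a.elt⁻¹ • a.graph = b.elt⁻¹ • b.graph) ∧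
    ((∃ c : FExp φ, a * a⁻¹ = c * c⁻¹ ∧ c⁻¹ * c = b⁻¹ * b) ↔
      ∃ k : G, a.graph = k • b.graph) ∧
    (((∃ u v : FExp φ, a = u * b * v) ∧ (∃ u v : FExp φ, b = u * a * v)) ↔
      ∃ c : FExp φ, a * a⁻¹ = c * c⁻¹ ∧ c⁻¹ * c = b⁻¹ * b) :=
  ⟨FExp.mul_inv_eq_mul_inv_iff a b, FExp.inv_mul_eq_inv_mul_iff a b, FExp.greenD_iff a b,
    FExp.greenJ_iff_greenD a b⟩

/-- Green's relations on `F(G)`: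
`(Γ,g) R (Ξ,h)` iff `Γ = Ξ`; `(Γ,g) L (Ξ,h)` iff `g⁻¹Γ = h⁻¹Ξ`;
`(Γ,g) D (Ξ,h)` iff `Γ = kΞ` for some `k ∈ G`; and `J = D` on `F(G)`.
(In an inverse monoid, `a R b` iff `a·a⁻¹ = b·b⁻¹`, `a L b` iff `a⁻¹·a = b⁻¹·b`,
`a D b` iff there is `c` with `a R c` and `c L b`, and `a J b` iff each of `a`, `b` is a
two-sided multiple of the other.) -/
theorem statement10 {G : Type u} [Group G] {X : Type v} (φ : X → G)
    (hφ : Subgroup.closure (Set.range φ) = ⊤) (a b : FExp φ) :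
    (a * a⁻¹ = b * b⁻¹ ↔ a.graph = b.graph) ∧
    (a⁻¹ * a = b⁻¹ * b ↔ a.elt⁻¹ • a.graph = b.elt⁻¹ • b.graph) ∧
    ((∃ c : FExp φ, a * a⁻¹ = c * c⁻¹ ∧ c⁻¹ * c = b⁻¹ * b) ↔
      ∃ k : G, a.graph = k • b.graph) ∧
    (((∃ u v : FExp φ, a = u * b * v) ∧ (∃ u v : FExp φ, b = u * a * v)) ↔
      ∃ c : FExp φ, a * a⁻¹ = c * c⁻¹ ∧ c⁻¹ * c = b⁻¹ * b) :=
  statement10_general φ a b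

end FInvPaper
end

section
/- Let FG_X be the free group on the set X, regarded as an X-generated group via the canonical inclusion. Then P(FG_X) is a free X-generated perfect F-inverse monoid: for every perfect F-inverse monoid T and every map f : X → T there is a unique morphism of F-inverse monoids (preserving ·, ⁻¹, m and 1) from P(FG_X) to T sending (Γ_x, x) to f(x) for every x ∈ X. -/
namespace FInvPaper

universe u v w

/-!
In a perfect F-inverse monoid `T` the maximum elements are units, as
`m a · m a⁻¹ = m (a a⁻¹) = 1`, so `x ↦ m(f x)` extends to a group morphism `N : FG_X → Tˣ`.
In `P(G)` every element factors as `(Γ, g) = (∏_{e ∈ Γ} (Γ_e, 1)) · (∅, g)`, where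
`(∅, x) = m(Γ_x, x)` and `(Γ_(h,x), 1) = (∅, h) (Γ_x, x) (Γ_x, x)⁻¹ (∅, h)⁻¹`. Hence a morphism
extending `f` must be `(Γ, g) ↦ (∏_{(h,x) ∈ Γ} N h · f x (f x)⁻¹ · (N h)⁻¹) · N g`. The factors
are commuting idempotents, so the product only depends on the edge set of `Γ`, and the formula
is indeed a morphism.
-/

lemma Finset.prod_union_of_isIdempotentElem {ι M : Type*} [CommMonoid M] [DecidableEq ι]
    (hM : ∀ m : M, IsIdempotentElem m) (s t : Finset ι) (f : ι → M) :
    ∏ i ∈ s ∪ t, f i = (∏ i ∈ s, f i) * ∏ i ∈ t, f i := by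
  rw [← Finset.prod_union_inter, ← Finset.prod_sdiff (Finset.inter_subset_union (s := s)),
    mul_assoc, (hM _).eq]

section InverseMonoid

variable {T : Type w} [InverseMonoid T]

def idempotents (T : Type w) [InverseMonoid T] : Submonoid T where
  carrier := {e | IsIdempotentElem e}
  mul_mem' he hf := idem_mul_idem he hf
  one_mem' := one_mul 1

instance : CommMonoid (idempotents T) where
  mul_comm e f := Subtype.ext (InverseMonoid.idem_comm _ _ e.2 f.2)

lemma isIdempotentElem_idempotents (e : idempotents T) : IsIdempotentElem e :=
  Subtype.ext e.2

@[simp] lemma inv_coe_idempotents (e : idempotents T) : (e : T)⁻¹ = e := idem_inv e.2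

def mulInvIdem (a : T) : idempotents T := ⟨a * a⁻¹, mul_inv_idem a⟩

lemma units_val_inv_eq_inv_val (u : Tˣ) : ((u⁻¹ : Tˣ) : T) = (u : T)⁻¹ := by
  have h : (u : T)⁻¹ * u = 1 := by
    calc (u : T)⁻¹ * u = ↑u⁻¹ * u * ((u : T)⁻¹ * u) := by rw [Units.inv_mul, one_mul]
      _ = ↑u⁻¹ * (u * (u : T)⁻¹ * u) := by simp only [mul_assoc]
      _ = 1 := by rw [InverseMonoid.mul_inv_self_mul, Units.inv_mul]
  calc ((u⁻¹ : Tˣ) : T) = (u : T)⁻¹ * u * ↑u⁻¹ := by rw [h, one_mul]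
    _ = (u : T)⁻¹ := by rw [mul_assoc, Units.mul_inv, mul_one]

def conjIdem : Tˣ →* Monoid.End (idempotents T) where
  toFun u :=
    { toFun e := ⟨u * e * ↑u⁻¹, by
        show _ * _ = _
        simp only [mul_assoc, Units.inv_mul_cancel_left, ← mul_assoc (e : T) e, e.2.eq]⟩
      map_one' := Subtype.ext (by simp)
      map_mul' e f := Subtype.ext (by simp [mul_assoc]) }
  map_one' := Monoid.End.ext (M := idempotents T) fun e => Subtype.ext <|
    show ((1 : Tˣ) : T) * e * ↑(1 : Tˣ)⁻¹ = e by simp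
  map_mul' u v := Monoid.End.ext (M := idempotents T) fun e => Subtype.ext <|
    show ((u * v : Tˣ) : T) * e * ↑(u * v)⁻¹ = u * (v * e * ↑v⁻¹) * ↑u⁻¹ by
      simp [mul_assoc]

@[simp] lemma coe_conjIdem (u : Tˣ) (e : idempotents T) :
    (conjIdem u e : T) = u * e * ↑u⁻¹ := rfl

end InverseMonoid

section FInverseMonoid

variable {T : Type w} [FInverseMonoid T]

lemma nle_mx {a b : T} (h : sigma b a) : nle b (mx a) := (FInverseMonoid.mx_isMaxOp a).2 b h

lemma mx_units (u : Tˣ) : mx (u : T) = u := by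
  obtain ⟨e, he, hu⟩ := nle_mx (sigma_refl (u : T))
  have hve : (↑u⁻¹ * mx (u : T)) * e = 1 := by
    rw [mul_assoc, ← hu, Units.inv_mul]
  have he1 : e = 1 := by
    calc e = (↑u⁻¹ * mx (u : T)) * e * e := by rw [hve, one_mul]
      _ = 1 := by rw [mul_assoc _ e e, he, hve]
  rw [he1, mul_one] at hu
  exact hu.symm

variable (hT : ∀ a b : T, mx a * mx b = mx (a * b))
include hT

lemma mx_eq_one_of_isIdempotentElem {e : T} (he : IsIdempotentElem e) : mx e = 1 := by
  have hm : mx e * mx e = mx e := by rw [hT, he.eq]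
  obtain ⟨f, -, h1⟩ := nle_mx (a := e) ⟨e, he, (one_mul e).trans he.eq.symm⟩
  calc mx e = mx e * (mx e * f) := by rw [← h1, mul_one]
    _ = 1 := by rw [← mul_assoc, hm]; exact h1.symm

lemma mx_coe_idempotents (e : idempotents T) : mx (e : T) = 1 :=
  mx_eq_one_of_isIdempotentElem hT e.2

def mxUnit (a : T) : Tˣ where
  val := mx a
  inv := mx a⁻¹
  val_inv := by rw [hT, mx_eq_one_of_isIdempotentElem hT (mul_inv_idem a)]
  inv_val := by rw [hT, mx_eq_one_of_isIdempotentElem hT (inv_mul_idem a)]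

lemma mul_inv_mul_mx (a : T) : a * a⁻¹ * mx a = a := by
  obtain ⟨e, he, ha⟩ := nle_mx (sigma_refl a)
  set u := mxUnit hT a
  have ha : a = u * e := ha
  calc a * a⁻¹ * mx a = u * e * (u * e)⁻¹ * u := by rw [← ha]; rfl
    _ = u * e * (e * ↑u⁻¹) * u := by
      rw [InverseMonoid.mul_inv_rev, idem_inv he, units_val_inv_eq_inv_val]
    _ = u * e := by simp [mul_assoc, he]
    _ = a := ha.symm

end FInverseMonoid

section PExp

variable {G : Type u} [Group G] {X : Type v} {φ : X → G}


@[simp] lemma emptyG_edges : (emptyG φ).edges = ∅ := rfl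
@[simp] lemma edgeG_edges (e : G × X) : (edgeG φ e).edges = {e} := rfl

lemma Subgraph.NoIsolated.ed_eq {Γ : Subgraph φ} (h : Γ.NoIsolated) : Γ.ed = Γ :=
  Subgraph.ext' (Set.ext fun v => ⟨fun ⟨e, he, hv⟩ =>
    hv.elim (· ▸ Γ.src_mem e he) (· ▸ Γ.tgt_mem e he), h v⟩) rfl

lemma PExp.ext_edges {a b : PExp φ} (h : a.graph.edges = b.graph.edges) (he : a.elt = b.elt) :
    a = b := by
  refine PExp.ext' ?_ he
  rw [← a.noIsolated.ed_eq, ← b.noIsolated.ed_eq]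
  exact Subgraph.ext' (by simp only [Subgraph.ed, h]) h

noncomputable def PExp.edgeFinset (a : PExp φ) : Finset (G × X) := a.finite.2.toFinset

@[simp] lemma PExp.mem_edgeFinset {a : PExp φ} {e : G × X} :
    e ∈ a.edgeFinset ↔ e ∈ a.graph.edges :=
  Set.Finite.mem_toFinset _

lemma translate_injective (g : G) : Function.Injective (fun e : G × X => (g * e.1, e.2)) :=
  fun e e' h => by simpa [Prod.ext_iff] using h

lemma PExp.edgeFinset_one : (1 : PExp φ).edgeFinset = ∅ := by
  ext; simp

lemma PExp.edgeFinset_pMax (a : PExp φ) : (pMax a).edgeFinset = ∅ := by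
  ext; simp [pMax]

lemma PExp.edgeFinset_genEltP (x : X) : (genEltP φ x).edgeFinset = {(1, x)} := by
  ext; simp [genEltP]

section EdgeFinset

variable [DecidableEq G] [DecidableEq X]

lemma PExp.edgeFinset_mul (a b : PExp φ) : (a * b).edgeFinset =
    a.edgeFinset ∪ b.edgeFinset.image (fun e => (a.elt * e.1, e.2)) := by
  ext; simp

lemma PExp.edgeFinset_inv (a : PExp φ) :
    a⁻¹.edgeFinset = a.edgeFinset.image (fun e => (a.elt⁻¹ * e.1, e.2)) := by
  ext; simp

end EdgeFinset

def unitP (φ : X → G) (g : G) : PExp φ where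
  graph := emptyG φ
  elt := g
  finite := ⟨Set.finite_empty, Set.finite_empty⟩
  noIsolated := by intro v hv; simp [emptyG] at hv

def edgeP (φ : X → G) (e : G × X) : PExp φ where
  graph := edgeG φ e
  elt := 1
  finite := ⟨(Set.finite_singleton _).insert _, Set.finite_singleton _⟩
  noIsolated := edgeG_noIsolated φ e

def spanP (φ : X → G) (s : Finset (G × X)) : PExp φ where
  graph :=
    { verts := ⋃ e ∈ s, {e.1, e.1 * φ e.2}
      edges := s
      src_mem := fun e he => Set.mem_biUnion he (by simp)
      tgt_mem := fun e he => Set.mem_biUnion he (by simp) }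
  elt := 1
  finite := ⟨s.finite_toSet.biUnion fun _ _ => Set.toFinite _, s.finite_toSet⟩
  noIsolated := by
    intro v hv
    obtain ⟨e, he, hv⟩ := Set.mem_iUnion₂.mp hv
    exact ⟨e, he, by simpa using hv⟩

lemma unitP_one : unitP φ 1 = 1 := rfl

lemma unitP_mul (g h : G) : unitP φ g * unitP φ h = unitP φ (g * h) :=
  PExp.ext_edges (by simp [unitP]) rfl

lemma pMax_genEltP (x : X) : pMax (genEltP φ x) = unitP φ (φ x) := rfl

lemma edgeP_eq_conj (e : G × X) :
    edgeP φ e = unitP φ e.1 * (genEltP φ e.2 * (genEltP φ e.2)⁻¹ * unitP φ e.1⁻¹) :=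
  PExp.ext_edges (by simp [edgeP, unitP, genEltP])
    (show (1 : G) = e.1 * (φ e.2 * (φ e.2)⁻¹ * e.1⁻¹) by group)

lemma spanP_empty : spanP φ ∅ = 1 := PExp.ext_edges (by simp [spanP]) rfl

lemma spanP_insert [DecidableEq G] [DecidableEq X] (e : G × X) (s : Finset (G × X)) :
    spanP φ (insert e s) = edgeP φ e * spanP φ s :=
  PExp.ext_edges (by ext; simp [spanP, edgeP]) (mul_one 1).symm

lemma spanP_mul_unitP (a : PExp φ) : spanP φ a.edgeFinset * unitP φ a.elt = a :=
  PExp.ext_edges (by ext; simp [spanP, unitP]) (by simp [spanP, unitP])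

end PExp

section Lift

variable {G : Type u} [Group G] {X : Type v} {φ : X → G} {T : Type w} [FInverseMonoid T]
  (f : X → T) (N : G →* Tˣ)

def edgeIdem (e : G × X) : idempotents T := conjIdem (N e.1) (mulInvIdem (f e.2))

lemma edgeIdem_translate (g : G) (e : G × X) :
    edgeIdem f N (g * e.1, e.2) = conjIdem (N g) (edgeIdem f N e) := by
  simp [edgeIdem, Monoid.End.coe_mul]

lemma prod_edgeIdem_image [DecidableEq G] [DecidableEq X] (g : G) (s : Finset (G × X)) :
    ∏ e ∈ s.image (fun e => (g * e.1, e.2)), edgeIdem f N e =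
      conjIdem (N g) (∏ e ∈ s, edgeIdem f N e) := by
  rw [Finset.prod_image (translate_injective g).injOn, map_prod]
  exact Finset.prod_congr rfl fun e _ => edgeIdem_translate f N g e

namespace PExp

noncomputable def lift (a : PExp φ) : T := ↑(∏ e ∈ a.edgeFinset, edgeIdem f N e) * N a.elt

lemma lift_one : lift f N (1 : PExp φ) = 1 := by
  simp [lift, edgeFinset_one]

lemma lift_mul (a b : PExp φ) : lift f N (a * b) = lift f N a * lift f N b := by
  classical
  simp only [lift, edgeFinset_mul, mul_elt, prod_edgeIdem_image, map_mul,
    Finset.prod_union_of_isIdempotentElem isIdempotentElem_idempotents, Submonoid.coe_mul,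
    coe_conjIdem, Units.val_mul]
  simp [mul_assoc]

lemma lift_inv (a : PExp φ) : lift f N a⁻¹ = (lift f N a)⁻¹ := by
  classical
  simp only [lift, edgeFinset_inv, inv_elt, prod_edgeIdem_image, coe_conjIdem,
    InverseMonoid.mul_inv_rev, inv_coe_idempotents, map_inv, inv_inv,
    ← units_val_inv_eq_inv_val]
  simp [mul_assoc]

lemma lift_pMax (hT : ∀ a b : T, mx a * mx b = mx (a * b)) (a : PExp φ) :
    lift f N (pMax a) = mx (lift f N a) := by
  rw [lift, lift, edgeFinset_pMax, ← hT, mx_coe_idempotents hT, mx_units]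
  simp [pMax]

lemma lift_genEltP (hT : ∀ a b : T, mx a * mx b = mx (a * b))
    (hN : ∀ x, (N (φ x) : T) = mx (f x)) (x : X) : lift f N (genEltP φ x) = f x := by
  rw [lift, edgeFinset_genEltP]
  simp [edgeIdem, mulInvIdem, genEltP, hN, mul_inv_mul_mx hT]

lemma eq_lift (h : PExp φ → T) (h1 : h 1 = 1) (hmul : ∀ a b, h (a * b) = h a * h b)
    (hinv : ∀ a, h a⁻¹ = (h a)⁻¹) (hgen : ∀ x, h (genEltP φ x) = f x)
    (hunit : ∀ g, h (unitP φ g) = N g) : h = lift f N := by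
  classical
  have hedge (e : G × X) : h (edgeP φ e) = edgeIdem f N e := by
    rw [edgeP_eq_conj, hmul, hmul, hmul, hinv, hgen, hunit, hunit]
    simp [edgeIdem, mulInvIdem, mul_assoc]
  have hspan (s : Finset (G × X)) : h (spanP φ s) = ↑(∏ e ∈ s, edgeIdem f N e) := by
    induction s using Finset.induction_on with
    | empty => rw [spanP_empty, h1, Finset.prod_empty, Submonoid.coe_one]
    | insert e s he ih =>
      rw [spanP_insert, hmul, hedge, ih, Finset.prod_insert he, Submonoid.coe_mul]
  funext a
  conv_lhs => rw [← spanP_mul_unitP a]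
  rw [hmul, hspan, hunit]
  rfl

end PExp

end Lift

section FreeGroup

variable {X : Type v} {T : Type w} [FInverseMonoid T]
  (hT : ∀ a b : T, mx a * mx b = mx (a * b)) (f : X → T)

def freeUnits : FreeGroup X →* Tˣ := FreeGroup.lift fun x => mxUnit hT (f x)

lemma freeUnits_of (x : X) : (freeUnits hT f (FreeGroup.of x) : T) = mx (f x) := by
  simp [freeUnits, mxUnit]

lemma map_unitP_eq_freeUnits (h : PExp (FreeGroup.of : X → FreeGroup X) → T) (h1 : h 1 = 1)
    (hmul : ∀ a b, h (a * b) = h a * h b) (hmax : ∀ a, h (pMax a) = mx (h a))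
    (hgen : ∀ x, h (genEltP FreeGroup.of x) = f x) (g : FreeGroup X) :
    h (unitP FreeGroup.of g) = freeUnits hT f g := by
  let H : FreeGroup X →* T :=
    { toFun g := h (unitP FreeGroup.of g)
      map_one' := by rw [unitP_one, h1]
      map_mul' g g' := by rw [← unitP_mul, hmul] }
  have hH : H = (Units.coeHom T).comp (freeUnits hT f) :=
    FreeGroup.ext_hom _ _ fun x => by
      simp [H, ← pMax_genEltP, hmax, hgen, freeUnits_of]
  exact DFunLike.congr_fun hH g

end FreeGroup

/-- `P(FG_X)`, for the free group `FG_X` on `X` (generated via the canonical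
inclusion), is a free `X`-generated perfect F-inverse monoid: for every perfect F-inverse
monoid `T` and every map `f : X → T` there is a unique map `P(FG_X) → T` preserving `·`,
`⁻¹`, `m`, `1` and sending `(Γ_x, x)` to `f x` for every `x ∈ X`. -/
theorem statement19 {X : Type v} {T : Type w} [FInverseMonoid T]
    (hT : ∀ a b : T, mx a * mx b = mx (a * b)) (f : X → T) :
    ∃ h : PExp (FreeGroup.of : X → FreeGroup X) → T,
      (h 1 = 1 ∧
       (∀ a b, h (a * b) = h a * h b) ∧
       (∀ a, h a⁻¹ = (h a)⁻¹) ∧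
       (∀ a, h (pMax a) = mx (h a)) ∧
       ∀ x : X, h (genEltP FreeGroup.of x) = f x) ∧
      ∀ h' : PExp (FreeGroup.of : X → FreeGroup X) → T,
        (h' 1 = 1 ∧
         (∀ a b, h' (a * b) = h' a * h' b) ∧
         (∀ a, h' a⁻¹ = (h' a)⁻¹) ∧
         (∀ a, h' (pMax a) = mx (h' a)) ∧
         ∀ x : X, h' (genEltP FreeGroup.of x) = f x) → h' = h := by
  refine ⟨PExp.lift f (freeUnits hT f),
    ⟨PExp.lift_one f _, PExp.lift_mul f _, PExp.lift_inv f _, PExp.lift_pMax f _ hT,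
      PExp.lift_genEltP f _ hT (freeUnits_of hT f)⟩, ?_⟩
  rintro h ⟨h1, hmul, hinv, hmax, hgen⟩
  exact PExp.eq_lift f _ h h1 hmul hinv hgen (map_unitP_eq_freeUnits hT f h h1 hmul hmax hgen)

end FInvPaper
end
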